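/- Let r ≥ 2 be a natural number, q = 2r − 1, and let Pₙ be the polynomials defined by P₀(x) = 1, P₁(x) = x, P_{n+1}(x) = ((q+1)/q)·x·Pₙ(x) − (1/q)·P_{n−1}(x). Then for every n ∈ ℕ and every s ∈ [−1,1), (1 − Pₙ(s))/(1 − s) ≤ (r/(r−1))·n, and also P'ₙ(1) ≤ (r/(r−1))·n. (Equivalently, ψ_s(x) ≤ (r/(r−1))·|x| for every x ∈ F_r and every s ∈ [−1,1].) -/

import Mathlib

/-!
The quantity `E_n = P_{n+1}² − ((q+1)/q)·s·P_{n+1}·P_n + P_n²/q` is multiplied by `1/q` at each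
step of the recurrence, so `E_n = q^{-(n+1)}(1 − s²)`. Viewing this as a quadratic equation for
`P_{n+1}` whose values at `±1` are nonnegative and whose vertex lies in `(−1, 1)` gives
`|Pₙ(s)| ≤ 1` on `[−1, 1]`. The recurrence then yields
`P_{n+1} − P_{n+2} = (P_n − P_{n+1})/q + ((q+1)/q)(1 − s)P_{n+1}`, so the increments
`P_n − P_{n+1}` stay below `K(1 − s)` with `K = (q+1)/(q−1)`, the fixed point of `K ↦ K/q + (q+1)/q`.
Telescoping gives `1 − Pₙ(s) ≤ K n (1 − s)`, and since `Pₙ(1) = 1` the bound on `P'ₙ(1)` is the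
limit of this bound on difference quotients.
-/

noncomputable section

/-- The spherical polynomials `Pₙ` for the parameter `q`:
`P₀ = 1`, `P₁ = X`, `P_{n+2}(x) = ((q+1)/q)·x·P_{n+1}(x) − (1/q)·Pₙ(x)`. -/
def P (q : ℝ) : ℕ → ℝ → ℝ
  | 0 => fun _ => 1
  | 1 => fun s => s
  | (n + 2) => fun s => ((q + 1) / q) * s * P q (n + 1) s - (1 / q) * P q n s

open Set Filter Topology

lemma abs_le_one_of_quadratic_eq_zero {b c x : ℝ} (hb : |b| < 2) (hone : 0 ≤ 1 - b + c)
    (hneg_one : 0 ≤ 1 + b + c) (hx : x ^ 2 - b * x + c = 0) : |x| ≤ 1 := by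
  obtain ⟨hb₁, hb₂⟩ := abs_lt.mp hb
  have hle : (x - 1) * (x + 1 - b) ≤ 0 := by nlinarith
  have hge : (x + 1) * (x - 1 - b) ≤ 0 := by nlinarith
  refine abs_le.mpr ⟨?_, ?_⟩ <;> nlinarith

lemma deriv_le_of_slope_le {f : ℝ → ℝ} {a x C : ℝ} (hax : a < x) (hf : DifferentiableAt ℝ f x)
    (h : ∀ y ∈ Ioo a x, slope f x y ≤ C) : deriv f x ≤ C := by
  have hlim : Tendsto (slope f x) (𝓝[<] x) (𝓝 (deriv f x)) :=
    (hasDerivAt_iff_tendsto_slope_left_right.mp hf.hasDerivAt).1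
  exact le_of_tendsto hlim (eventually_of_mem (Ioo_mem_nhdsLT hax) h)

namespace P

variable {q : ℝ}

@[simp] lemma zero (s : ℝ) : P q 0 s = 1 := rfl

@[simp] lemma one (s : ℝ) : P q 1 s = s := rfl

lemma add_two (n : ℕ) (s : ℝ) :
    P q (n + 2) s = (q + 1) / q * s * P q (n + 1) s - 1 / q * P q n s := rfl

lemma apply_one (hq : q ≠ 0) : ∀ n, P q n 1 = 1
  | 0 => rfl
  | 1 => rfl
  | n + 2 => by
    rw [add_two, apply_one hq (n + 1), apply_one hq n]
    field_simp
    ring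

lemma differentiable : ∀ n, Differentiable ℝ (P q n)
  | 0 => differentiable_const 1
  | 1 => differentiable_id
  | n + 2 => by
    have h₁ := differentiable (n + 1)
    have h₀ := differentiable n
    change Differentiable ℝ fun s => (q + 1) / q * s * P q (n + 1) s - 1 / q * P q n s
    fun_prop

lemma energy_eq (hq : q ≠ 0) (n : ℕ) (s : ℝ) :
    P q (n + 1) s ^ 2 - (q + 1) / q * s * P q (n + 1) s * P q n s + 1 / q * P q n s ^ 2
      = (1 / q) ^ (n + 1) * (1 - s ^ 2) := by
  induction n with
  | zero =>
    simp only [zero_add, pow_one, one, zero]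
    field_simp
    ring
  | succ n ih =>
    rw [add_two]
    linear_combination 1 / q * ih

lemma abs_le_one_of_energy_eq (hq : 1 < q) {s x y e : ℝ} (hs : |s| ≤ 1) (hy : |y| ≤ 1)
    (he : q * e ≤ 1 - s ^ 2) (hE : x ^ 2 - (q + 1) / q * s * x * y + 1 / q * y ^ 2 = e) :
    |x| ≤ 1 := by
  have hq₀ : 0 < q := by linarith
  have hsy : |s * y| ≤ 1 := by rw [abs_mul]; exact mul_le_one₀ hs (abs_nonneg y) hy
  -- `q − 1 + s² + y² − (q+1)|sy| = (q − 1)(1 − |sy|) + (|s| − |y|)²`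
  have hvalues : 0 ≤ q - (q + 1) * |s * y| + y ^ 2 + s ^ 2 - 1 := by
    rw [abs_mul] at hsy ⊢
    nlinarith [sq_nonneg (|s| - |y|), sq_abs s, sq_abs y,
      mul_nonneg (sub_nonneg.mpr hq.le) (sub_nonneg.mpr hsy)]
  have hb : |(q + 1) / q * s * y| < 2 := by
    rw [mul_assoc, abs_mul, abs_of_pos (by positivity : 0 < (q + 1) / q)]
    calc (q + 1) / q * |s * y| ≤ (q + 1) / q := mul_le_of_le_one_right (by positivity) hsy
      _ < 2 := by rw [div_lt_iff₀ hq₀]; linarith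
  refine abs_le_one_of_quadratic_eq_zero (c := 1 / q * y ^ 2 - e) hb ?_ ?_
    (by linear_combination hE)
  all_goals
    rw [← mul_le_mul_iff_of_pos_left hq₀]
    field_simp
    nlinarith [neg_abs_le (s * y), le_abs_self (s * y)]

lemma abs_le_one (hq : 1 < q) {s : ℝ} (hs : |s| ≤ 1) : ∀ n, |P q n s| ≤ 1
  | 0 => by simp
  | n + 1 => by
    have hq₀ : 0 < q := by linarith
    refine abs_le_one_of_energy_eq hq hs (abs_le_one hq hs n) ?_ (energy_eq hq₀.ne' n s)
    have hpow : (1 / q) ^ (n + 1) ≤ 1 / q :=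
      pow_le_of_le_one (by positivity) ((div_le_one hq₀).mpr hq.le) n.succ_ne_zero
    have hs2 : 0 ≤ 1 - s ^ 2 := by nlinarith [sq_abs s, abs_nonneg s]
    calc q * ((1 / q) ^ (n + 1) * (1 - s ^ 2)) ≤ q * (1 / q * (1 - s ^ 2)) := by gcongr
      _ = 1 - s ^ 2 := by field_simp

lemma sub_succ_le (hq : 1 < q) {s : ℝ} (hs : |s| ≤ 1) :
    ∀ n, P q n s - P q (n + 1) s ≤ (q + 1) / (q - 1) * (1 - s)
  | 0 => by
    have hK : 1 ≤ (q + 1) / (q - 1) := by rw [le_div_iff₀ (by linarith)]; linarith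
    show 1 - s ≤ _
    exact le_mul_of_one_le_left (by linarith [le_abs_self s]) hK
  | n + 1 => by
    have hq₀ : 0 < q := by linarith
    have ih := sub_succ_le hq hs n
    have hP : P q (n + 1) s ≤ 1 := (abs_le.mp (abs_le_one hq hs (n + 1))).2
    have hstep : P q (n + 1) s - P q (n + 2) s
        = 1 / q * (P q n s - P q (n + 1) s) + (q + 1) / q * (1 - s) * P q (n + 1) s := by
      rw [add_two]
      field_simp
      ring
    have hfix : 1 / q * ((q + 1) / (q - 1)) + (q + 1) / q = (q + 1) / (q - 1) := by
      field_simp [(by linarith : q - 1 ≠ 0)]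
      ring
    calc P q (n + 1) s - P q (n + 2) s
        = 1 / q * (P q n s - P q (n + 1) s) + (q + 1) / q * (1 - s) * P q (n + 1) s := hstep
      _ ≤ 1 / q * ((q + 1) / (q - 1) * (1 - s)) + (q + 1) / q * (1 - s) * 1 := by
        have : 0 ≤ 1 - s := by linarith [le_abs_self s]
        gcongr
      _ = (q + 1) / (q - 1) * (1 - s) := by linear_combination (1 - s) * hfix

lemma one_sub_le (hq : 1 < q) {s : ℝ} (hs : |s| ≤ 1) (n : ℕ) :
    1 - P q n s ≤ (q + 1) / (q - 1) * n * (1 - s) := by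
  induction n with
  | zero => simp
  | succ n ih =>
    push_cast
    linarith [sub_succ_le hq hs n]

lemma one_sub_div_le (hq : 1 < q) (n : ℕ) {s : ℝ} (hs : s ∈ Ico (-1 : ℝ) 1) :
    (1 - P q n s) / (1 - s) ≤ (q + 1) / (q - 1) * n := by
  rw [div_le_iff₀ (by linarith [hs.2])]
  exact one_sub_le hq (abs_le.mpr ⟨hs.1, hs.2.le⟩) n

lemma deriv_one_le (hq : 1 < q) (n : ℕ) : deriv (P q n) 1 ≤ (q + 1) / (q - 1) * n := by
  refine deriv_le_of_slope_le (a := -1) (by norm_num) (differentiable n 1) fun s hs => ?_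
  rw [slope_def_field, apply_one (by linarith) n, ← neg_div_neg_eq, neg_sub, neg_sub]
  exact one_sub_div_le hq n ⟨hs.1.le, hs.2⟩

end P

theorem psi_linear_bound (r : ℕ) (hr : 2 ≤ r) (n : ℕ) :
    (∀ s ∈ Set.Ico (-1 : ℝ) 1,
      (1 - P (2 * (r : ℝ) - 1) n s) / (1 - s) ≤ (r : ℝ) / ((r : ℝ) - 1) * (n : ℝ)) ∧
    deriv (P (2 * (r : ℝ) - 1) n) 1 ≤ (r : ℝ) / ((r : ℝ) - 1) * (n : ℝ) := by
  have hr' : (2 : ℝ) ≤ r := by exact_mod_cast hr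
  have hq : 1 < 2 * (r : ℝ) - 1 := by linarith
  have hK : (2 * (r : ℝ) - 1 + 1) / (2 * (r : ℝ) - 1 - 1) = r / (r - 1) := by
    rw [div_eq_div_iff (by linarith) (by linarith)]
    ring
  rw [← hK]
  exact ⟨fun s hs => P.one_sub_div_le hq n hs, P.deriv_one_le hq n⟩
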